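/- Let h, w, k : ℤ⁺ → ℤ⁺ with k ≻ 1. If h ≍ k, then L^k[h, w] ≍ h·w; that is, there exist constants 0 < a ≤ b with a·h(n)·w(n) ≤ L^{k(n)}[h(n), w(n)] ≤ b·h(n)·w(n) for all large n. -/

import Mathlib

/-!
For the lower bound, the diagonal picture `c i i = h` alone has
`C(h + k - 1, k - 1) ^ w ≥ 2 ^ (min h (k - 1) * w)` colorings.

For the upper bound, `C(c + k - 1, k - 1) * x ^ c ≤ ((c + k) * x) ^ c / c! ≤ exp ((c + k) * x)` for
every `x ≥ 0`. Choosing `x = (1/2) ^ ℓ` for a loop of span `ℓ` gives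
`log C(c + k - 1, k - 1) ≤ 2 c ℓ + k (1/2) ^ ℓ`. Summed over a picture, `∑ c ℓ` is the total
height `h w` (each loop is counted once in each column it covers) and `∑ (1/2) ^ ℓ ≤ w` is a
geometric series, so `L^k[h, w] ≤ (2 h + k) w`, which is `O(h w)` as soon as `k = O(h)`.
-/

open Filter

/-- A Kostant picture of height `η`. -/
def IsKostant {w : ℕ} (η : Fin w → ℕ) (c : Fin w → Fin w → ℕ) : Prop :=
  (∀ i j : Fin w, j < i → c i j = 0) ∧
  ∀ m : Fin w, (∑ i : Fin w, ∑ j : Fin w, (if i ≤ m ∧ m ≤ j then c i j else 0)) = η m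

/-- Kostant's partition function. -/
noncomputable def KPF {w : ℕ} (η : Fin w → ℕ) : ℕ :=
  Set.ncard {c : Fin w → Fin w → ℕ | IsKostant η c}

/-- `L[h,w] = ln KPF[(h,…,h)]` for the constant tuple of length `w`. -/
noncomputable def Lbox (h w : ℕ) : ℝ := Real.log (KPF (fun _ : Fin w => h))

/-- `T^k[η]`: the maximal number of `k`-colorings of a Kostant picture of height `η`,
where a picture `c` has `∏_{i ≤ j} C(c i j + k - 1, k - 1)` colorings. -/
noncomputable def Tcol {w : ℕ} (k : ℕ) (η : Fin w → ℕ) : ℕ :=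
  sSup ((fun c : Fin w → Fin w → ℕ =>
      ∏ i : Fin w, ∏ j : Fin w,
        (if i ≤ j then Nat.choose (c i j + k - 1) (k - 1) else 1)) ''
    {c : Fin w → Fin w → ℕ | IsKostant η c})

/-- `L^k[h,w] = ln T^k[(h,…,h)]` for the constant tuple of length `w`. -/
noncomputable def Lcol (k h w : ℕ) : ℝ := Real.log (Tcol k (fun _ : Fin w => h))

open Finset Real
open scoped Nat

theorem Nat.two_pow_le_centralBinom (n : ℕ) : 2 ^ n ≤ n.centralBinom := by
  induction n with
  | zero => simp
  | succ n ih =>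
    have hrec := Nat.succ_mul_centralBinom_succ n
    refine Nat.le_of_mul_le_mul_left ?_ n.succ_pos
    rw [hrec, pow_succ]
    nlinarith

theorem Nat.two_pow_le_choose_add {a b m : ℕ} (ha : m ≤ a) (hb : m ≤ b) :
    2 ^ m ≤ (a + b).choose b :=
  calc 2 ^ m ≤ (m + m).choose m := by
        simpa [Nat.centralBinom_eq_two_mul_choose, two_mul] using Nat.two_pow_le_centralBinom m
    _ ≤ (m + b).choose m := Nat.choose_le_choose m (by omega)
    _ = (m + b).choose b := Nat.choose_symm_add
    _ ≤ (a + b).choose b := Nat.choose_le_choose b (by omega)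

theorem choose_mul_pow_le_exp (c : ℕ) {k : ℕ} (hk : 0 < k) {x : ℝ} (hx : 0 ≤ x) :
    ((c + k - 1).choose (k - 1) : ℝ) * x ^ c ≤ exp ((c + k) * x) := by
  have hchoose : ((c + k - 1).choose (k - 1) : ℝ) ≤ ((c + k : ℕ) : ℝ) ^ c / c ! := by
    rw [show k - 1 = c + k - 1 - c by omega, Nat.choose_symm (by omega)]
    refine (Nat.choose_le_pow_div c _).trans ?_
    gcongr
    omega
  calc ((c + k - 1).choose (k - 1) : ℝ) * x ^ c ≤ ((c + k : ℕ) : ℝ) ^ c / c ! * x ^ c := by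
        gcongr
    _ = ((c + k) * x) ^ c / c ! := by push_cast; rw [mul_pow]; ring
    _ ≤ exp ((c + k) * x) := Real.pow_div_factorial_le_exp _ (by positivity) c

theorem log_choose_le (c : ℕ) {k ℓ : ℕ} (hk : 0 < k) (hℓ : 1 ≤ ℓ) :
    log ((c + k - 1).choose (k - 1)) ≤ 2 * c * ℓ + k * (1 / 2) ^ ℓ := by
  set x : ℝ := (1 / 2) ^ ℓ
  have hx : 0 < x := by positivity
  have hx1 : x ≤ 1 := pow_le_one₀ (by norm_num) (by norm_num)
  have hC : (0 : ℝ) < (c + k - 1).choose (k - 1) := by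
    exact_mod_cast Nat.choose_pos (by omega)
  have hlogx : log x = -(ℓ * log 2) := by simp [x, log_inv]
  have key := log_le_log (by positivity) (choose_mul_pow_le_exp c hk hx.le)
  rw [log_mul hC.ne' (by positivity), log_pow, log_exp, hlogx] at key
  have hℓR : (1 : ℝ) ≤ ℓ := by exact_mod_cast hℓ
  calc log ((c + k - 1).choose (k - 1)) ≤ c * ℓ * log 2 + c * x + k * x := by linarith
    _ ≤ c * ℓ * 1 + c * ℓ + k * x := by
        gcongr
        · linarith [log_two_lt_d9]
        · linarith
    _ = 2 * c * ℓ + k * x := by ring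

section Kostant

variable {w : ℕ} {η : Fin w → ℕ} {c : Fin w → Fin w → ℕ}

theorem IsKostant.le (hc : IsKostant η c) (i j : Fin w) : c i j ≤ η i := by
  rcases lt_or_ge j i with hji | hij
  · simp [hc.1 i j hji]
  · rw [← hc.2 i]
    calc c i j = if i ≤ i ∧ i ≤ j then c i j else 0 := by simp [hij]
      _ ≤ ∑ j', if i ≤ i ∧ i ≤ j' then c i j' else 0 :=
          single_le_sum (f := fun j' => if i ≤ i ∧ i ≤ j' then c i j' else 0)
            (fun _ _ => Nat.zero_le _) (mem_univ j)
      _ ≤ ∑ i', ∑ j', if i' ≤ i ∧ i ≤ j' then c i' j' else 0 :=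
          single_le_sum (f := fun i' => ∑ j', if i' ≤ i ∧ i ≤ j' then c i' j' else 0)
            (fun _ _ => Nat.zero_le _) (mem_univ i)

theorem finite_setOf_isKostant (η : Fin w → ℕ) : {c | IsKostant η c}.Finite :=
  (Set.finite_Iic fun i (_ : Fin w) => η i).subset fun _ hc i j => hc.le i j

theorem isKostant_diagonal (η : Fin w → ℕ) :
    IsKostant η fun i j => if i = j then η i else 0 := by
  refine ⟨fun i j hji => if_neg (ne_of_gt hji), fun m => ?_⟩
  rw [sum_eq_single m (fun i _ hi => ?_) (by simp), sum_eq_single m (fun j _ hj => ?_) (by simp)]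
  · simp
  · simp [Ne.symm hj]
  · refine sum_eq_zero fun j _ => ite_eq_right_iff.mpr fun hm => if_neg ?_
    rintro rfl
    exact hi (le_antisymm hm.1 hm.2)

/-- The span `j + 1 - i` of a loop `(i, j)` is truncated to `0` when `j < i`, so no `i ≤ j` guard
is needed. -/
theorem IsKostant.sum_mul_span_eq (hc : IsKostant η c) :
    ∑ i, ∑ j, c i j * (j + 1 - i : ℕ) = ∑ m, η m :=
  calc ∑ i, ∑ j, c i j * (j + 1 - i : ℕ)
      = ∑ i, ∑ j, ∑ m, if i ≤ m ∧ m ≤ j then c i j else 0 := by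
        refine sum_congr rfl fun i _ => sum_congr rfl fun j _ => ?_
        rw [← sum_filter, sum_const, filter_le_le_eq_Icc, Fin.card_Icc, smul_eq_mul, mul_comm]
    _ = ∑ m, η m := by
        simp_rw [← hc.2]
        exact (sum_congr rfl fun i _ => sum_comm).trans sum_comm

theorem sum_half_pow_span_le (i : Fin w) :
    ∑ j : Fin w, (if i ≤ j then (1 / 2 : ℝ) ^ (j + 1 - i : ℕ) else 0) ≤ 1 :=
  calc ∑ j : Fin w, (if i ≤ j then (1 / 2 : ℝ) ^ (j + 1 - i : ℕ) else 0)
      = ∑ j ∈ range w, if i.1 ≤ j then (1 / 2 : ℝ) ^ (j + 1 - i) else 0 :=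
        Fin.sum_univ_eq_sum_range (fun j => if i.1 ≤ j then (1 / 2 : ℝ) ^ (j + 1 - i) else 0) w
    _ = ∑ j ∈ Ico i.1 w, (1 / 2 : ℝ) ^ (j + 1 - i) := by
        rw [← sum_filter]
        congr 1
        ext j
        simp [and_comm]
    _ = 1 / 2 * ∑ ℓ ∈ range (w - i), (1 / 2 : ℝ) ^ ℓ := by
        rw [sum_Ico_eq_sum_range, mul_sum]
        refine sum_congr rfl fun ℓ _ => ?_
        rw [show i.1 + ℓ + 1 - i = ℓ + 1 by omega, pow_succ']
    _ ≤ 1 := by linarith [sum_geometric_two_le (w - i)]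

end Kostant

section Colorings

variable {w : ℕ}

def numColorings (k : ℕ) (c : Fin w → Fin w → ℕ) : ℕ :=
  ∏ i : Fin w, ∏ j : Fin w, if i ≤ j then (c i j + k - 1).choose (k - 1) else 1

theorem numColorings_le_Tcol (k : ℕ) {η : Fin w → ℕ} {c : Fin w → Fin w → ℕ}
    (hc : IsKostant η c) : numColorings k c ≤ Tcol k η :=
  le_csSup ((finite_setOf_isKostant η).image _).bddAbove ⟨c, hc, rfl⟩

theorem exists_isKostant_Tcol_eq (k : ℕ) (η : Fin w → ℕ) :
    ∃ c, IsKostant η c ∧ Tcol k η = numColorings k c := by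
  have hne : (numColorings k '' {c | IsKostant η c}).Nonempty :=
    ⟨_, _, isKostant_diagonal η, rfl⟩
  obtain ⟨c, hc, hmem⟩ := hne.csSup_mem ((finite_setOf_isKostant η).image _)
  exact ⟨c, hc, hmem.symm⟩

theorem prod_choose_le_Tcol (k : ℕ) (η : Fin w → ℕ) :
    ∏ m, (η m + k - 1).choose (k - 1) ≤ Tcol k η := by
  refine le_of_eq_of_le ?_ (numColorings_le_Tcol k (isKostant_diagonal η))
  refine prod_congr rfl fun i _ => ?_
  rw [prod_eq_single i (fun j _ hji => ?_) (absurd (mem_univ i))]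
  · simp
  · simp [Ne.symm hji]

theorem log_numColorings_le {k : ℕ} (hk : 0 < k) {η : Fin w → ℕ} {c : Fin w → Fin w → ℕ}
    (hc : IsKostant η c) : log (numColorings k c) ≤ 2 * ∑ m, (η m : ℝ) + k * w := by
  have hpos : ∀ i j : Fin w, 0 < if i ≤ j then (c i j + k - 1).choose (k - 1) else 1 := by
    intro i j
    split_ifs
    exacts [Nat.choose_pos (by omega), one_pos]
  have hterm : ∀ i j : Fin w,
      log ((if i ≤ j then (c i j + k - 1).choose (k - 1) else 1 : ℕ) : ℝ) ≤
        2 * ((c i j * (j + 1 - i : ℕ) : ℕ) : ℝ) +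
          k * (if i ≤ j then (1 / 2 : ℝ) ^ (j + 1 - i : ℕ) else 0) := by
    intro i j
    split_ifs with hij
    · push_cast
      have := log_choose_le (c i j) hk (ℓ := j + 1 - i) (by simp only [Fin.le_def] at hij; omega)
      linarith
    · simp [show (j : ℕ) + 1 - i = 0 by simp only [Fin.le_def] at hij; omega]
  calc log (numColorings k c)
      = ∑ i, ∑ j, log ((if i ≤ j then (c i j + k - 1).choose (k - 1) else 1 : ℕ) : ℝ) := by
        simp only [numColorings, Nat.cast_prod]
        rw [log_prod fun i _ => (prod_pos fun j _ => Nat.cast_pos.mpr (hpos i j)).ne']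
        exact sum_congr rfl fun i _ => log_prod fun j _ => (Nat.cast_pos.mpr (hpos i j)).ne'
    _ ≤ ∑ i, ∑ j, (2 * ((c i j * (j + 1 - i : ℕ) : ℕ) : ℝ) +
          k * (if i ≤ j then (1 / 2 : ℝ) ^ (j + 1 - i : ℕ) else 0)) :=
        sum_le_sum fun i _ => sum_le_sum fun j _ => hterm i j
    _ = 2 * ((∑ i : Fin w, ∑ j : Fin w, c i j * (j + 1 - i : ℕ) : ℕ) : ℝ) +
          k * ∑ i : Fin w, ∑ j : Fin w, (if i ≤ j then (1 / 2 : ℝ) ^ (j + 1 - i : ℕ) else 0) := by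
        push_cast
        simp only [sum_add_distrib, mul_sum]
    _ ≤ 2 * ∑ m, (η m : ℝ) + k * ∑ _i : Fin w, 1 := by
        rw [hc.sum_mul_span_eq]
        push_cast
        gcongr with i
        exact sum_half_pow_span_le i
    _ = 2 * ∑ m, (η m : ℝ) + k * w := by simp

end Colorings

theorem Lcol_le {k : ℕ} (hk : 0 < k) (h w : ℕ) : Lcol k h w ≤ (2 * h + k) * w := by
  obtain ⟨c, hc, hT⟩ := exists_isKostant_Tcol_eq k (fun _ : Fin w => h)
  rw [Lcol, hT]
  refine (log_numColorings_le hk hc).trans_eq ?_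
  simp only [sum_const, card_univ, Fintype.card_fin, nsmul_eq_mul]
  ring

theorem min_mul_log_two_le_Lcol {k : ℕ} (hk : 0 < k) (h w : ℕ) :
    (min h (k - 1) * w : ℕ) * log 2 ≤ Lcol k h w := by
  have hpow : 2 ^ (min h (k - 1) * w) ≤ Tcol k (fun _ : Fin w => h) := by
    refine le_trans ?_ (prod_choose_le_Tcol k _)
    rw [prod_const, card_univ, Fintype.card_fin, pow_mul, show h + k - 1 = h + (k - 1) by omega]
    exact Nat.pow_le_pow_left (Nat.two_pow_le_choose_add (min_le_left _ _) (min_le_right _ _)) w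
  rw [Lcol, ← log_pow]
  exact log_le_log (by positivity) (by exact_mod_cast hpow)

theorem Lcol_le_of_mul_le {k h : ℕ} (hk : 0 < k) {γ : ℝ} (hγ : 0 < γ) (hkh : γ * k ≤ h) (w : ℕ) :
    Lcol k h w ≤ (2 + 1 / γ) * (h * w) := by
  have hk' : (k : ℝ) ≤ h / γ := by rw [le_div_iff₀ hγ]; linarith
  calc Lcol k h w ≤ (2 * h + k) * w := Lcol_le hk h w
    _ ≤ (2 * h + h / γ) * w := by gcongr
    _ = (2 + 1 / γ) * (h * w) := by ring

theorem le_Lcol_of_le_mul {k h : ℕ} (hk : 2 ≤ k) {d : ℝ} (hd : 0 ≤ d) (hhk : h ≤ d * k) (w : ℕ) :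
    log 2 / (2 * (d + 1)) * (h * w) ≤ Lcol k h w := by
  have hmin : (h : ℝ) / (2 * (d + 1)) ≤ (min h (k - 1) : ℕ) := by
    have hkR : (2 : ℝ) ≤ k := by exact_mod_cast hk
    rw [Nat.cast_min, Nat.cast_sub (by omega), Nat.cast_one, le_min_iff,
      div_le_iff₀ (by positivity), div_le_iff₀ (by positivity)]
    constructor <;> nlinarith [h.cast_nonneg (α := ℝ)]
  calc log 2 / (2 * (d + 1)) * (h * w) = (h : ℝ) / (2 * (d + 1)) * w * log 2 := by ring
    _ ≤ (min h (k - 1) : ℕ) * w * log 2 := by gcongr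
    _ = (min h (k - 1) * w : ℕ) * log 2 := by push_cast; ring
    _ ≤ Lcol k h w := min_mul_log_two_le_Lcol (by omega) h w

theorem eventually_two_le_of_tendsto_one_div {k : ℕ → ℕ} (hk : ∀ n, 0 < k n)
    (hk1 : Tendsto (fun n => (1 : ℝ) / k n) atTop (nhds 0)) : ∀ᶠ n in atTop, 2 ≤ k n := by
  filter_upwards [hk1.eventually (gt_mem_nhds (by norm_num : (0 : ℝ) < 1 / 2))] with n hn
  by_contra! hlt
  rw [show k n = 1 by have := hk n; omega] at hn
  norm_num at hn

theorem Lcol_asymp_equiv_general (h w k : ℕ → ℕ)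
    (hk : ∀ n, 0 < k n)
    (hk1 : Tendsto (fun n => (1 : ℝ) / k n) atTop (nhds 0))
    (hhk : ∃ c d : ℝ, 0 < c ∧ c ≤ d ∧ ∀ᶠ n : ℕ in atTop,
      c * (k n : ℝ) ≤ (h n : ℝ) ∧ (h n : ℝ) ≤ d * (k n : ℝ)) :
    ∃ a b : ℝ, 0 < a ∧ a ≤ b ∧ ∀ᶠ n : ℕ in atTop,
      a * ((h n : ℝ) * (w n : ℝ)) ≤ Lcol (k n) (h n) (w n) ∧
      Lcol (k n) (h n) (w n) ≤ b * ((h n : ℝ) * (w n : ℝ)) := by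
  obtain ⟨γ, d, hγ, hγd, hev⟩ := hhk
  have hd : 0 ≤ d := by linarith
  refine ⟨log 2 / (2 * (d + 1)), 2 + 1 / γ, by positivity, ?_, ?_⟩
  · calc log 2 / (2 * (d + 1)) ≤ log 2 / 2 := by gcongr; linarith
      _ ≤ 2 := by linarith [log_two_lt_d9]
      _ ≤ 2 + 1 / γ := by simp only [le_add_iff_nonneg_right]; positivity
  · filter_upwards [hev, eventually_two_le_of_tendsto_one_div hk hk1] with n ⟨hlo, hhi⟩ hk2
    exact ⟨le_Lcol_of_le_mul hk2 hd hhi _, Lcol_le_of_mul_le (hk n) hγ hlo _⟩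

/-- If `k ≻ 1` and `h ≍ k`, then `L^k[h,w] ≍ h·w`. -/
theorem Lcol_asymp_equiv (h w k : ℕ → ℕ)
    (hh : ∀ n, 0 < h n) (hw : ∀ n, 0 < w n) (hk : ∀ n, 0 < k n)
    (hk1 : Tendsto (fun n => (1 : ℝ) / k n) atTop (nhds 0))
    (hhk : ∃ c d : ℝ, 0 < c ∧ c ≤ d ∧ ∀ᶠ n : ℕ in atTop,
      c * (k n : ℝ) ≤ (h n : ℝ) ∧ (h n : ℝ) ≤ d * (k n : ℝ)) :
    ∃ a b : ℝ, 0 < a ∧ a ≤ b ∧ ∀ᶠ n : ℕ in atTop,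
      a * ((h n : ℝ) * (w n : ℝ)) ≤ Lcol (k n) (h n) (w n) ∧
      Lcol (k n) (h n) (w n) ≤ b * ((h n : ℝ) * (w n : ℝ)) :=
  Lcol_asymp_equiv_general h w k hk hk1 hhk
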